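/- Let λ = (x₁,…,xₙ) be a dominant weight for Spin(2n+1) (descending non-negative half-integers, all congruent mod ℤ) and μ = (y₁,…,y_{n−1}) a dominant weight for Spin(2n−1) with all entries congruent to those of λ mod ℤ, such that μ 2-step interlaces λ. Let z₁ ≥ … ≥ z_{2n−1} be the joint decreasing rearrangement. Then as a Spin(2)-module, Hom_{Spin(2n−1)}((μ),(λ)) ≅ B(z₁−z₂) ⊗ B(z₃−z₄) ⊗ ⋯ ⊗ A(z_{2n−1}), where A(a) = ⊕_{k=−a, step 1}^{a} (k) and B(b) = ⊕_{k=−b, step 2}^{b} (k). -/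

import Mathlib

/-
STATEMENT 11 (branching from Spin(2n+1) to Spin(2n−1)×Spin(2), formalized in
the case n = 2 — Spin(5) ⊃ Spin(3)×Spin(2) — as sanctioned by the context):
for dominant weights λ = (x₁,x₂) of Spin(5) (descending non-negative
half-integers, congruent mod ℤ) and μ = (y) of Spin(3) congruent to λ mod ℤ
with x₁ ≥ y ≥ x₃ = 0 (2-step interlacing), letting z₁ ≥ z₂ ≥ z₃ be the joint
decreasing rearrangement, one has, as Spin(2)-modules,
  Hom_{Spin(3)}((μ),(λ)) ≅ B(z₁−z₂) ⊗ A(z₃),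
where A(a) = ⊕_{k=−a, step 1}^a (k) and B(b) = ⊕_{k=−b, step 2}^b (k).
Formalization: doubled coordinates X = 2x ∈ ℕ are used throughout (so weights
become integers, congruence mod ℤ becomes congruence mod 2), and u denotes a
square root of the Spin(2)/torus coordinate, so the character of the Spin(2)
weight k is u^{2k}.  The statement is the resulting character identity on the
common torus, in cross-multiplied Weyl character formula form for B₂
(2(λ+ρ) = (X₁+3, X₂+1)).  Since Y ≤ X₁ and X₂ ≤ X₁, the sorted doubled values
are Z₁ = max X₁ Y, Z₂ = max X₂ (min X₁ Y), Z₃ = min X₂ Y, and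
χ_{A(z₃)} = sc Z₃, χ_{B(z₁−z₂)} = scB ((Z₁−Z₂)/2).
-/

noncomputable section

/-- Character of the SU(2)-module of (doubled) highest weight m: Σ u^{m−2i}. -/
def sc (m : ℕ) (u : ℂˣ) : ℂ :=
  ∑ i ∈ Finset.range (m+1), ((u ^ ((m:ℤ) - 2*i) : ℂˣ) : ℂ)

/-- Character of the Spin(2)-module B(b) = (b)+(b−2)+⋯+(−b), b an integer,
in the square-root variable u: Σ u^{2b−4j}. -/
def scB (b : ℕ) (u : ℂˣ) : ℂ :=
  ∑ j ∈ Finset.range (b+1), ((u ^ (2*(b:ℤ) - 4*j) : ℂˣ) : ℂ)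

/-- u^μ − u^{−μ}. -/
def Aexp (u : ℂˣ) (μ : ℤ) : ℂ := ((u ^ μ : ℂˣ) : ℂ) - ((u ^ (-μ) : ℂˣ) : ℂ)

/-- Weyl character formula numerator for the Spin(5) = B₂ representation of
doubled highest weight (X₁,X₂), in square-root torus variables:
2(λ+ρ) = (X₁+3, X₂+1). -/
def NumB2 (X1 X2 : ℕ) (u1 u2 : ℂˣ) : ℂ :=
  Aexp u1 ((X1:ℤ)+3) * Aexp u2 ((X2:ℤ)+1) - Aexp u1 ((X2:ℤ)+1) * Aexp u2 ((X1:ℤ)+3)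

/-!
Write `A = Aexp u₁`, `B = Aexp u₂` and `F(a, e) = A(a+2) B(e) - A(a) B(e+2)`. Since
`χ_m · A(1) = A(m+1)` and `A(3) = χ₂ · A(1)`, the Weyl denominator turns a product of
SU(2)-characters into a difference: `NumB2 0 0 · χ_Y(u₁) χ_m(u₂) = F(Y+1, m+1) - F(Y-1, m-1)`.
For `Y < X₂` the multiplicity character is `χ_{B(d)} χ_Y` with `d = (X₁ - X₂)/2`, and the sum over
these `Y` telescopes to `χ_{B(d)} F(X₂-1, X₂-1)`, the bottom term `F(-1,-1)` or `F(0,0)` vanishing.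
For `Y ≥ X₂` it is `χ_{B((X₁-Y)/2)} χ_{X₂}`, and the Pieri rule
`χ_{B(k+1)} A(e) = A(e+2k+2) + χ_{B(k)} A(e-2)` makes that sum telescope to
`NumB2 X₁ X₂ - χ_{B(d)} F(X₂-1, X₂-1)`.
-/

namespace Spin5Branching

open Finset

lemma Aexp_neg (u : ℂˣ) (k : ℤ) : Aexp u (-k) = -Aexp u k := by
  rw [Aexp, Aexp, neg_neg, neg_sub]

lemma Aexp_zero (u : ℂˣ) : Aexp u 0 = 0 := by
  rw [Aexp, neg_zero, sub_self]

lemma sum_zpow_mul_Aexp (u : ℂˣ) (n : ℕ) (f : ℕ → ℤ)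
    (hf : ∀ i ≤ n, f (n - i) = -f i) (k : ℤ) :
    (∑ i ∈ range (n + 1), ((u ^ f i : ℂˣ) : ℂ)) * Aexp u k
      = ∑ i ∈ range (n + 1), Aexp u (k + f i) := by
  have reflect : ∑ i ∈ range (n + 1), ((u ^ (f i - k) : ℂˣ) : ℂ)
      = ∑ i ∈ range (n + 1), ((u ^ (-(k + f i)) : ℂˣ) : ℂ) := by
    rw [← sum_range_reflect]
    refine sum_congr rfl fun i hi => ?_
    rw [Nat.add_sub_cancel, hf i (Nat.lt_succ_iff.1 (mem_range.1 hi))]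
    ring_nf
  simp only [Aexp, sum_mul, mul_sub, ← Units.val_mul, ← zpow_add, sum_sub_distrib]
  rw [← reflect]
  congr 1
  exact sum_congr rfl fun i _ => by rw [add_comm]

lemma sc_mul_Aexp_one (u : ℂˣ) (m : ℕ) : sc m u * Aexp u 1 = Aexp u (m + 1) := by
  have step : ∀ i ∈ range (m + 1), ((u ^ ((m : ℤ) - 2 * i) : ℂˣ) : ℂ) * Aexp u 1
      = ((u ^ ((m : ℤ) + 1 - 2 * i) : ℂˣ) : ℂ) - ((u ^ ((m : ℤ) + 1 - 2 * ↑(i + 1)) : ℂˣ) : ℂ) := by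
    intro i _
    simp only [Aexp, mul_sub, ← Units.val_mul, ← zpow_add]
    push_cast
    ring_nf
  rw [sc, sum_mul, sum_congr rfl step,
    sum_range_sub' (fun i : ℕ => ((u ^ ((m : ℤ) + 1 - 2 * i) : ℂˣ) : ℂ))]
  simp only [Aexp]
  push_cast
  ring_nf

lemma sc_two_mul_Aexp (u : ℂˣ) (k : ℤ) :
    sc 2 u * Aexp u k = Aexp u (k + 2) + Aexp u k + Aexp u (k - 2) := by
  rw [sc, sum_zpow_mul_Aexp u 2 _ (fun i hi => by interval_cases i <;> norm_num)]
  simp only [sum_range_succ, sum_range_zero]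
  norm_num [← sub_eq_add_neg]

lemma scB_mul_Aexp (u : ℂˣ) (b : ℕ) (k : ℤ) :
    scB b u * Aexp u k = ∑ j ∈ range (b + 1), Aexp u (k + (2 * b - 4 * j)) :=
  sum_zpow_mul_Aexp u b _ (fun j hj => by push_cast [hj]; ring) k

lemma scB_succ_mul_Aexp (u : ℂˣ) (b : ℕ) (e : ℤ) :
    scB (b + 1) u * Aexp u e = Aexp u (e + 2 * (b + 1)) + scB b u * Aexp u (e - 2) := by
  rw [scB_mul_Aexp, scB_mul_Aexp, sum_range_succ', add_comm]
  push_cast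
  congr 1
  exact sum_congr rfl fun j _ => by ring_nf

lemma sum_filter_mod_two_eq {M : Type*} [AddCommMonoid M] (p : ℕ) (f : ℕ → M) :
    ∑ Y ∈ (range (p + 1)).filter (fun Y => Y % 2 = p % 2), f Y
      = ∑ t ∈ range (p / 2 + 1), f (p - 2 * t) := by
  apply sum_nbij' (fun Y => (p - Y) / 2) (fun t => p - 2 * t)
  all_goals intro x hx
  all_goals simp only [mem_filter, mem_range] at hx ⊢
  all_goals first | omega | (congr 1; omega)

-- The Spin(2)-character of `Hom_{Spin(3)}((Y/2), (λ))` for `λ = (X1/2, X2/2)`.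
def multChar (X1 X2 Y : ℕ) (u : ℂˣ) : ℂ :=
  scB ((max X1 Y - max X2 (min X1 Y)) / 2) u * sc (min X2 Y) u

lemma multChar_of_le {X1 X2 Y : ℕ} (h2 : X2 ≤ Y) (h1 : Y ≤ X1) (u : ℂˣ) :
    multChar X1 X2 Y u = scB ((X1 - Y) / 2) u * sc X2 u := by
  rw [multChar, max_eq_left h1, min_eq_right h1, max_eq_right h2, min_eq_left h2]

lemma multChar_of_lt {X1 X2 Y : ℕ} (h2 : Y < X2) (h1 : X2 ≤ X1) (u : ℂˣ) :
    multChar X1 X2 Y u = scB ((X1 - X2) / 2) u * sc Y u := by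
  rw [multChar, max_eq_left (h2.le.trans h1), min_eq_right (h2.le.trans h1), max_eq_left h2.le,
    min_eq_right h2.le]

section

variable (u1 u2 : ℂˣ)

def crossShift (a e : ℤ) : ℂ :=
  Aexp u1 (a + 2) * Aexp u2 e - Aexp u1 a * Aexp u2 (e + 2)

lemma NumB2_zero_mul_sc_mul_sc (Y m : ℕ) :
    NumB2 0 0 u1 u2 * (sc Y u1 * sc m u2)
      = crossShift u1 u2 (Y + 1) (m + 1) - crossShift u1 u2 (Y - 1) (m - 1) := by
  have hA3 := sc_mul_Aexp_one u1 2
  have hB3 := sc_mul_Aexp_one u2 2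
  have hA := sc_mul_Aexp_one u1 Y
  have hB := sc_mul_Aexp_one u2 m
  have hA' := sc_two_mul_Aexp u1 (Y + 1)
  have hB' := sc_two_mul_Aexp u2 (m + 1)
  norm_num at hA3 hB3
  simp only [NumB2, crossShift, CharP.cast_eq_zero, zero_add]
  linear_combination (norm := ring_nf)
    -(Aexp u2 1 * sc Y u1 * sc m u2) * hA3 + (Aexp u1 1 * sc Y u1 * sc m u2) * hB3
      + ((sc 2 u1 - sc 2 u2) * sc m u2 * Aexp u2 1) * hA
      + ((sc 2 u1 - sc 2 u2) * Aexp u1 (Y + 1)) * hB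
      + Aexp u2 (m + 1) * hA' - Aexp u1 (Y + 1) * hB'

lemma sum_scB_mul_crossShift (a c : ℤ) (n : ℕ) :
    ∑ t ∈ range (n + 1), scB t u2 *
        (crossShift u1 u2 (a - 2 * t + 1) (c + 1) - crossShift u1 u2 (a - 2 * t - 1) (c - 1))
      = Aexp u1 (a + 3) * Aexp u2 (c + 1) - Aexp u1 (a - 2 * n + 1) * Aexp u2 (c + 2 * n + 3)
        - scB n u2 * crossShift u1 u2 (a - 2 * n - 1) (c - 1) := by
  induction n with
  | zero =>
    simp only [zero_add, sum_range_one, scB, crossShift]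
    norm_num
    ring_nf
  | succ n ih =>
    have h1 := scB_succ_mul_Aexp u2 n (c + 1)
    have h3 := scB_succ_mul_Aexp u2 n (c + 3)
    rw [sum_range_succ, ih]
    simp only [crossShift]
    push_cast
    linear_combination (norm := ring_nf)
      Aexp u1 (a - 2 * n + 1) * h1 - Aexp u1 (a - 2 * n - 1) * h3

lemma crossShift_self_eq_zero {a : ℤ} (ha : a = -1 ∨ a = 0) : crossShift u1 u2 a a = 0 := by
  rcases ha with rfl | rfl
  · norm_num [crossShift, Aexp_neg]
  · rw [crossShift, Aexp_zero, Aexp_zero, mul_zero, zero_mul, sub_zero]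

lemma NumB2_zero_mul_sum_upper (X2 d : ℕ) :
    NumB2 0 0 u1 u2 * ∑ t ∈ range (d + 1),
        sc (X2 + 2 * d - 2 * t) u1 * multChar (X2 + 2 * d) X2 (X2 + 2 * d - 2 * t) u2
      = NumB2 (X2 + 2 * d) X2 u1 u2 - scB d u2 * crossShift u1 u2 (X2 - 1) (X2 - 1) := by
  calc _ = ∑ t ∈ range (d + 1), scB t u2 *
        (crossShift u1 u2 ((X2 + 2 * d : ℕ) - 2 * t + 1) (X2 + 1)
          - crossShift u1 u2 ((X2 + 2 * d : ℕ) - 2 * t - 1) (X2 - 1)) := by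
        rw [mul_sum]
        refine sum_congr rfl fun t ht => ?_
        have ht : t ≤ d := Nat.lt_succ_iff.1 (mem_range.1 ht)
        have key := NumB2_zero_mul_sc_mul_sc u1 u2 (X2 + 2 * d - 2 * t) X2
        push_cast [Nat.cast_sub (by omega : 2 * t ≤ X2 + 2 * d)] at key ⊢
        rw [multChar_of_le (by omega) (by omega),
          show (X2 + 2 * d - (X2 + 2 * d - 2 * t)) / 2 = t by omega]
        linear_combination (norm := ring_nf) scB t u2 * key
    _ = _ := by
        rw [sum_scB_mul_crossShift, NumB2]
        push_cast
        ring_nf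

lemma NumB2_zero_mul_sum_lower (X2 d : ℕ) :
    NumB2 0 0 u1 u2 * ∑ r ∈ range (X2 / 2),
        sc (X2 + 2 * d - 2 * (d + 1 + r)) u1
          * multChar (X2 + 2 * d) X2 (X2 + 2 * d - 2 * (d + 1 + r)) u2
      = scB d u2 * crossShift u1 u2 (X2 - 1) (X2 - 1) := by
  let f : ℕ → ℂ := fun r => crossShift u1 u2 (X2 - 1 - 2 * r) (X2 - 1 - 2 * r)
  calc _ = ∑ r ∈ range (X2 / 2), scB d u2 * (f r - f (r + 1)) := by
        rw [mul_sum]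
        refine sum_congr rfl fun r hr => ?_
        have hr : 2 * r + 2 ≤ X2 := by have := mem_range.1 hr; omega
        have key := NumB2_zero_mul_sc_mul_sc u1 u2 (X2 + 2 * d - 2 * (d + 1 + r))
          (X2 + 2 * d - 2 * (d + 1 + r))
        simp only [f]
        push_cast [Nat.cast_sub (by omega : 2 * (d + 1 + r) ≤ X2 + 2 * d)] at key ⊢
        rw [multChar_of_lt (by omega) (by omega), show (X2 + 2 * d - X2) / 2 = d by omega]
        linear_combination (norm := ring_nf) scB d u2 * key
    _ = scB d u2 * (f 0 - f (X2 / 2)) := by rw [← mul_sum, sum_range_sub']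
    _ = _ := by
        simp only [f, Nat.cast_zero, mul_zero, sub_zero]
        rw [crossShift_self_eq_zero u1 u2 (a := X2 - 1 - 2 * (X2 / 2 : ℕ)) (by omega), sub_zero]

end

end Spin5Branching

open Spin5Branching Finset

theorem stmt11 (X1 X2 : ℕ) (h1 : X2 ≤ X1) (h2 : X1 % 2 = X2 % 2) (u1 u2 : ℂˣ) :
    NumB2 X1 X2 u1 u2 =
      NumB2 0 0 u1 u2 *
        ∑ Y ∈ (Finset.range (X1+1)).filter (fun Y => Y % 2 = X1 % 2),
          sc Y u1 * (scB ((max X1 Y - max X2 (min X1 Y)) / 2) u2 * sc (min X2 Y) u2) := by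
  obtain ⟨d, rfl⟩ : ∃ d, X1 = X2 + 2 * d := ⟨(X1 - X2) / 2, by omega⟩
  change _ = _ * ∑ Y ∈ _, sc Y u1 * multChar (X2 + 2 * d) X2 Y u2
  rw [sum_filter_mod_two_eq, show (X2 + 2 * d) / 2 + 1 = (d + 1) + X2 / 2 by omega,
    sum_range_add, mul_add, NumB2_zero_mul_sum_upper, NumB2_zero_mul_sum_lower, sub_add_cancel]
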